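/- Every nontrivial finite DP-chain embeds into any DP-chain of strictly greater (finite) cardinality. -/

import Mathlib

/-!
A DP-chain is rigid: `x * y` is `0` unless one factor is `1`, and `x → y` is `1` if `x ≤ y`,
`y` if `x = 1`, and the coatom otherwise. Hence every strictly monotone map between DP-chains
fixing `0`, `1` and (when it is not `0`) the coatom is an embedding. Such a map from an
`n`-element chain into an `m`-element chain with `n ≤ m` keeps the bottom element in place
and shifts every other element up by `m - n`.
-/

/-- A DP-chain: an MTL-chain (linearly ordered, bounded, integral, commutative
residuated lattice) with a coatom, in which `x * x = 0` for all `x < 1`. -/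
structure DPChain (α : Type*) [LinearOrder α] [Zero α] [One α] where
  zero_le : ∀ x : α, 0 ≤ x
  le_one : ∀ x : α, x ≤ 1
  mul : α → α → α
  imp : α → α → α
  mul_comm : ∀ x y, mul x y = mul y x
  mul_assoc : ∀ x y z, mul (mul x y) z = mul x (mul y z)
  mul_one : ∀ x, mul x 1 = x
  mul_le_mul : ∀ x y z : α, x ≤ y → mul x z ≤ mul y z
  residuation : ∀ x y z : α, mul x y ≤ z ↔ x ≤ imp y z
  coatom : α
  coatom_lt_one : coatom < 1
  le_coatom : ∀ x : α, x < 1 → x ≤ coatom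
  mul_self_eq_zero : ∀ x : α, x < 1 → mul x x = 0

section FinEnum

variable {γ : Type*} [LinearOrder γ] {n : ℕ} (e : Fin n ≃o γ)

lemma OrderIso.val_symm_eq_zero_of_isBot {x : γ} (hx : IsBot x) : (e.symm x : ℕ) = 0 := by
  have := e.symm.monotone (hx (e ⟨0, (e.symm x).pos⟩))
  rw [e.symm_apply_apply, Fin.le_def] at this
  exact Nat.le_zero.mp this

lemma OrderIso.val_symm_add_one_eq_of_isTop {x : γ} (hx : IsTop x) : (e.symm x : ℕ) + 1 = n := by
  have hle := e.symm.monotone (hx (e ⟨n - 1, by have := (e.symm x).pos; omega⟩))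
  rw [e.symm_apply_apply, Fin.le_def, Fin.val_mk] at hle
  have := (e.symm x).is_lt
  omega

lemma OrderIso.val_symm_add_one_eq_of_covBy {x y : γ} (h : x ⋖ y) :
    (e.symm x : ℕ) + 1 = e.symm y :=
  Nat.covBy_iff_add_one_eq.mp (Fin.covBy_iff.mp ((apply_covBy_apply_iff e.symm).mpr h))

end FinEnum

lemma exists_strictMono_map_isBot_isTop_covBy {α β : Type*} [LinearOrder α] [LinearOrder β]
    [Finite α] [Finite β] (h : Nat.card β ≤ Nat.card α) {a₀ a₁ c : β} {b₀ b₁ d : α}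
    (ha₀ : IsBot a₀) (ha₁ : IsTop a₁) (hc : c ⋖ a₁) (hb₀ : IsBot b₀) (hb₁ : IsTop b₁)
    (hd : d ⋖ b₁) : ∃ f : β → α, StrictMono f ∧ f a₀ = b₀ ∧ f a₁ = b₁ ∧ (a₀ < c → f c = d) := by
  have := Fintype.ofFinite α
  have := Fintype.ofFinite β
  set n := Nat.card β
  set m := Nat.card α
  let eβ : Fin n ≃o β := Fintype.orderIsoFinOfCardEq β Nat.card_eq_fintype_card.symm
  let eα : Fin m ≃o α := Fintype.orderIsoFinOfCardEq α Nat.card_eq_fintype_card.symm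
  let shift (i : Fin n) : Fin m := ⟨if (i : ℕ) = 0 then 0 else i + (m - n), by split_ifs <;> omega⟩
  have hshift : StrictMono shift := fun i j hij => by
    simp only [shift, Fin.lt_def] at hij ⊢
    split_ifs <;> omega
  have ha₀' := eβ.val_symm_eq_zero_of_isBot ha₀
  have ha₁' := eβ.val_symm_add_one_eq_of_isTop ha₁
  have hc' := eβ.val_symm_add_one_eq_of_covBy hc
  have hb₀' := eα.val_symm_eq_zero_of_isBot hb₀
  have hb₁' := eα.val_symm_add_one_eq_of_isTop hb₁
  have hd' := eα.val_symm_add_one_eq_of_covBy hd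
  refine ⟨eα ∘ shift ∘ eβ.symm, eα.strictMono.comp (hshift.comp eβ.symm.strictMono), ?_, ?_,
    fun hlt => ?_⟩
  all_goals simp only [Function.comp_apply, ← eα.eq_symm_apply, Fin.ext_iff, shift]
  · rw [if_pos ha₀', hb₀']
  · split_ifs <;> omega
  · have := Fin.lt_def.mp (eβ.symm.strictMono hlt)
    split_ifs <;> omega

namespace DPChain

variable {γ : Type*} [LinearOrder γ] [Zero γ] [One γ] (C : DPChain γ)

lemma coatom_covBy_one : C.coatom ⋖ 1 :=
  ⟨C.coatom_lt_one, fun x hcx hx1 => (C.le_coatom x hx1).not_gt hcx⟩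

lemma one_mul (x : γ) : C.mul 1 x = x := by rw [C.mul_comm, C.mul_one]

lemma mul_le_mul_left {x y : γ} (h : x ≤ y) (z : γ) : C.mul z x ≤ C.mul z y := by
  rw [C.mul_comm z, C.mul_comm z]
  exact C.mul_le_mul x y z h

lemma mul_eq_zero {x y : γ} (hx : x < 1) (hy : y < 1) : C.mul x y = 0 := by
  have hle : C.mul x y ≤ C.mul (max x y) (max x y) :=
    (C.mul_le_mul _ _ _ (le_max_left x y)).trans (C.mul_le_mul_left (le_max_right x y) _)
  rw [C.mul_self_eq_zero _ (max_lt hx hy)] at hle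
  exact le_antisymm hle (C.zero_le _)

lemma imp_eq_one {y z : γ} (h : y ≤ z) : C.imp y z = 1 :=
  le_antisymm (C.le_one _) ((C.residuation 1 y z).mp (by rwa [C.one_mul]))

lemma one_imp (z : γ) : C.imp 1 z = z :=
  le_antisymm (by simpa only [C.mul_one] using (C.residuation _ 1 z).mpr le_rfl)
    ((C.residuation z 1 z).mp (by rw [C.mul_one]))

lemma imp_eq_coatom {y z : γ} (hz : z < y) (hy : y < 1) : C.imp y z = C.coatom := by
  refine le_antisymm (C.le_coatom _ (lt_of_le_of_ne (C.le_one _) fun h => hz.not_ge ?_)) ?_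
  · simpa only [C.one_mul] using (C.residuation 1 y z).mpr h.ge
  · refine (C.residuation _ _ _).mp ?_
    rw [C.mul_eq_zero C.coatom_lt_one hy]
    exact C.zero_le z

variable {δ : Type*} [LinearOrder δ] [Zero δ] [One δ] (D : DPChain δ) {f : γ → δ}

lemma map_mul_of_strictMono (hf : StrictMono f) (h0 : f 0 = 0) (h1 : f 1 = 1) (x y : γ) :
    f (C.mul x y) = D.mul (f x) (f y) := by
  rcases (C.le_one x).eq_or_lt with rfl | hx
  · rw [C.one_mul, h1, D.one_mul]
  rcases (C.le_one y).eq_or_lt with rfl | hy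
  · rw [C.mul_one, h1, D.mul_one]
  rw [C.mul_eq_zero hx hy, h0, D.mul_eq_zero (h1 ▸ hf hx) (h1 ▸ hf hy)]

lemma map_imp_of_strictMono (hf : StrictMono f) (h1 : f 1 = 1)
    (hc : 0 < C.coatom → f C.coatom = D.coatom) (x y : γ) :
    f (C.imp x y) = D.imp (f x) (f y) := by
  rcases le_or_gt x y with hxy | hxy
  · rw [C.imp_eq_one hxy, h1, D.imp_eq_one (hf.monotone hxy)]
  rcases (C.le_one x).eq_or_lt with rfl | hx
  · rw [C.one_imp, h1, D.one_imp]
  have hc0 : 0 < C.coatom := ((C.zero_le y).trans_lt hxy).trans_le (C.le_coatom x hx)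
  rw [C.imp_eq_coatom hxy hx, hc hc0, D.imp_eq_coatom (hf hxy) (h1 ▸ hf hx)]

end DPChain

theorem finite_dpChain_embeds_into_larger_general
    {α β : Type*} [LinearOrder α] [Zero α] [One α] [LinearOrder β] [Zero β] [One β]
    [Finite β]
    (A : DPChain α) (B : DPChain β)
    (hcard : Nat.card β < Nat.card α) :
    ∃ f : β → α,
      Function.Injective f ∧
      f 0 = 0 ∧ f 1 = 1 ∧
      StrictMono f ∧
      (∀ x y : β, f (B.mul x y) = A.mul (f x) (f y)) ∧
      (∀ x y : β, f (B.imp x y) = A.imp (f x) (f y)) := by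
  have : Finite α := Nat.finite_of_card_ne_zero (by omega)
  obtain ⟨f, hf, h0, h1, hc⟩ := exists_strictMono_map_isBot_isTop_covBy hcard.le
    B.zero_le B.le_one B.coatom_covBy_one A.zero_le A.le_one A.coatom_covBy_one
  exact ⟨f, hf.injective, h0, h1, hf, B.map_mul_of_strictMono A hf h0 h1,
    B.map_imp_of_strictMono A hf h1 hc⟩

/-- Every nontrivial finite DP-chain embeds into any DP-chain of strictly
greater finite cardinality. -/
theorem finite_dpChain_embeds_into_larger
    {α β : Type*} [LinearOrder α] [Zero α] [One α] [LinearOrder β] [Zero β] [One β]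
    [Finite β] [Finite α] [Nontrivial β]
    (A : DPChain α) (B : DPChain β)
    (hcard : Nat.card β < Nat.card α) :
    ∃ f : β → α,
      Function.Injective f ∧
      f 0 = 0 ∧ f 1 = 1 ∧
      StrictMono f ∧
      (∀ x y : β, f (B.mul x y) = A.mul (f x) (f y)) ∧
      (∀ x y : β, f (B.imp x y) = A.imp (f x) (f y)) :=
  finite_dpChain_embeds_into_larger_general A B hcard
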